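/- arXiv:1712.02649 — 2 statements merged into one kernel-verified Lean document; each statement's English description precedes it below -/
import Mathlib

section
/- Let p ∈ (1,∞). There exist constants c, C > 0 depending only on p such that for all δ ≥ 0, all a ≥ 0, and all t > 0 with δ + a + t > 0, c·(δ+a+t)^{p-2} t² ≤ φ_a(t) ≤ C·(δ+a+t)^{p-2} t², where φ_a is the shifted N-function of φ = φ_{p,δ}. -/
/-!
The shift only moves `δ`: for `a, s ≥ 0` the integrand of `φ_a` is `(δ + a + s)^{p-2} s`, so
`φ_a = φ_{p, δ+a}`. For `p ≥ 1` the derivative `φ'(s) = (δ+s)^{p-2} s` is nondecreasing (for `p < 2`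
write it as `s^{p-1} (s/(δ+s))^{2-p}`), hence `(t/2) φ'(t/2) ≤ φ(t) ≤ t φ'(t)`, and
`δ + t/2` is comparable to `δ + t` up to the factor `2^{|p-2|}`.
-/

noncomputable section

/-- The N-function `φ_{p,δ}(t) = ∫₀ᵗ (δ+s)^{p-2} s ds`. -/
def phi (p δ t : ℝ) : ℝ := ∫ s in (0:ℝ)..t, (δ + s) ^ (p - 2) * s

/-- Its first derivative `φ'(t) = (δ+t)^{p-2} t`. -/
def phi' (p δ t : ℝ) : ℝ := (δ + t) ^ (p - 2) * t

/-- The shifted N-function `φ_a(t) = ∫₀ᵗ φ'(a+s)·s/(a+s) ds`. -/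
def phiShift (p δ a t : ℝ) : ℝ := ∫ s in (0:ℝ)..t, phi' p δ (a + s) * s / (a + s)

open Set intervalIntegral

theorem MonotoneOn.intervalIntegral_le_mul {f : ℝ → ℝ} {u v : ℝ} (huv : u ≤ v)
    (hf : MonotoneOn f (Icc u v)) : ∫ x in u..v, f x ≤ (v - u) * f v := by
  have hint : IntervalIntegrable f MeasureTheory.volume u v :=
    MonotoneOn.intervalIntegrable (by rwa [uIcc_of_le huv])
  calc ∫ x in u..v, f x ≤ ∫ _ in u..v, f v :=
        integral_mono_on huv hint intervalIntegrable_const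
          fun x hx => hf hx (right_mem_Icc.2 huv) hx.2
    _ = (v - u) * f v := by rw [integral_const, smul_eq_mul]

theorem MonotoneOn.mul_le_intervalIntegral {f : ℝ → ℝ} {u v : ℝ} (huv : u ≤ v)
    (hf : MonotoneOn f (Icc u v)) : (v - u) * f u ≤ ∫ x in u..v, f x := by
  have hint : IntervalIntegrable f MeasureTheory.volume u v :=
    MonotoneOn.intervalIntegrable (by rwa [uIcc_of_le huv])
  calc (v - u) * f u = ∫ _ in u..v, f u := by rw [integral_const, smul_eq_mul]
    _ ≤ ∫ x in u..v, f x :=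
        integral_mono_on huv intervalIntegrable_const hint
          fun x hx => hf (left_mem_Icc.2 huv) hx hx.1

theorem Real.rpow_le_two_rpow_abs_mul {x y : ℝ} (z : ℝ) (hx : 0 < x) (hxy : x ≤ y)
    (hy : y ≤ 2 * x) : y ^ z ≤ 2 ^ |z| * x ^ z := by
  have h1 : 1 ≤ y / x := (one_le_div hx).2 hxy
  have h2 : y / x ≤ 2 := (div_le_iff₀ hx).2 (by linarith)
  calc y ^ z = (y / x) ^ z * x ^ z := by
        rw [Real.div_rpow (by linarith) hx.le, div_mul_cancel₀ _ (Real.rpow_pos_of_pos hx z).ne']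
    _ ≤ 2 ^ |z| * x ^ z := by
        gcongr
        exact (Real.rpow_le_rpow_of_exponent_le h1 (le_abs_self z)).trans
          (Real.rpow_le_rpow (by linarith) h2 (abs_nonneg z))

theorem phiShift_eq_phi (p δ : ℝ) {a t : ℝ} (ha : 0 ≤ a) (ht : 0 ≤ t) :
    phiShift p δ a t = phi p (δ + a) t := by
  refine integral_congr fun s hs => ?_
  rw [uIcc_of_le ht] at hs
  simp only [phi']
  rcases (add_nonneg ha hs.1).eq_or_lt with h | h
  · obtain rfl : s = 0 := by linarith [hs.1]
    simp
  · rw [mul_assoc, mul_div_assoc, mul_div_cancel_left₀ _ h.ne', add_assoc]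

theorem phi_eq_integral_phi' (p δ t : ℝ) : phi p δ t = ∫ s in (0:ℝ)..t, phi' p δ s := rfl

theorem phi'_nonneg (p : ℝ) {δ t : ℝ} (hδ : 0 ≤ δ) (ht : 0 ≤ t) : 0 ≤ phi' p δ t := by
  unfold phi'
  positivity

theorem phi'_monotoneOn {p δ : ℝ} (hp : 1 ≤ p) (hδ : 0 ≤ δ) : MonotoneOn (phi' p δ) (Ici 0) := by
  intro s (hs : 0 ≤ s) t (ht : 0 ≤ t) hst
  unfold phi'
  rcases le_total 2 p with hp2 | hp2
  · exact mul_le_mul (Real.rpow_le_rpow (by positivity) (by linarith) (by linarith)) hst hs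
      (by positivity)
  rcases hs.eq_or_lt with rfl | hs0
  · simp only [add_zero, mul_zero]
    positivity
  have factor : ∀ x, 0 < x → (δ + x) ^ (p - 2) * x = x ^ (p - 1) * (x / (δ + x)) ^ (2 - p) := by
    intro x hx
    rw [Real.div_rpow hx.le (by positivity), ← mul_div_assoc, ← Real.rpow_add hx,
      show p - 1 + (2 - p) = 1 by ring, Real.rpow_one, show p - 2 = -(2 - p) by ring,
      Real.rpow_neg (by positivity), div_eq_mul_inv, mul_comm]
  have ht0 : 0 < t := hs0.trans_le hst
  have hfrac : s / (δ + s) ≤ t / (δ + t) := by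
    rw [div_le_div_iff₀ (by positivity) (by positivity)]
    nlinarith
  rw [factor s hs0, factor t ht0]
  exact mul_le_mul (Real.rpow_le_rpow hs (by linarith) (by linarith))
    (Real.rpow_le_rpow (by positivity) hfrac (by linarith)) (by positivity) (by positivity)

theorem phi_le_mul_phi' {p δ t : ℝ} (hp : 1 ≤ p) (hδ : 0 ≤ δ) (ht : 0 ≤ t) :
    phi p δ t ≤ t * phi' p δ t := by
  rw [phi_eq_integral_phi']
  simpa only [sub_zero] using ((phi'_monotoneOn hp hδ).mono Icc_subset_Ici_self).intervalIntegral_le_mul ht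

theorem mul_phi'_half_le_phi {p δ t : ℝ} (hp : 1 ≤ p) (hδ : 0 ≤ δ) (ht : 0 ≤ t) :
    t / 2 * phi' p δ (t / 2) ≤ phi p δ t := by
  have hmono := phi'_monotoneOn hp hδ
  have hint : ∀ u v, 0 ≤ u → 0 ≤ v → IntervalIntegrable (phi' p δ) MeasureTheory.volume u v :=
    fun u v hu hv => (hmono.mono fun x hx => le_min hu hv |>.trans hx.1).intervalIntegrable
  have hhead : 0 ≤ ∫ s in (0:ℝ)..t / 2, phi' p δ s :=
    integral_nonneg (by linarith) fun s hs => phi'_nonneg p hδ hs.1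
  have htail : t / 2 * phi' p δ (t / 2) ≤ ∫ s in t / 2..t, phi' p δ s := by
    simpa only [sub_half] using
      (hmono.mono fun x hx => (by linarith [hx.1] : (0:ℝ) ≤ x)).mul_le_intervalIntegral
        (by linarith : t / 2 ≤ t)
  rw [phi_eq_integral_phi', ← integral_add_adjacent_intervals (hint 0 (t / 2) le_rfl (by linarith))
    (hint (t / 2) t (by linarith) ht)]
  linarith

/-- For `p ∈ (1,∞)` there are constants `c, C > 0`, depending only on `p`, such that
`c·(δ+a+t)^{p-2} t² ≤ φ_a(t) ≤ C·(δ+a+t)^{p-2} t²` for all `δ ≥ 0`, `a ≥ 0` and all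
`t > 0` with `δ + a + t > 0`. -/
theorem phiShift_equiv_shifted_power (p : ℝ) (hp : 1 < p) :
    ∃ c C : ℝ, 0 < c ∧ 0 < C ∧ ∀ δ : ℝ, 0 ≤ δ → ∀ a : ℝ, 0 ≤ a → ∀ t : ℝ, 0 < t →
      0 < δ + a + t →
      c * ((δ + a + t) ^ (p - 2) * t ^ 2) ≤ phiShift p δ a t ∧
      phiShift p δ a t ≤ C * ((δ + a + t) ^ (p - 2) * t ^ 2) := by
  refine ⟨(4 * 2 ^ |p - 2|)⁻¹, 1, by positivity, one_pos, fun δ hδ a ha t ht _ => ?_⟩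
  have hb : 0 ≤ δ + a := add_nonneg hδ ha
  rw [phiShift_eq_phi p δ ha ht.le]
  constructor
  · have hcompare : (δ + a + t) ^ (p - 2) ≤ 2 ^ |p - 2| * (δ + a + t / 2) ^ (p - 2) :=
      Real.rpow_le_two_rpow_abs_mul _ (by positivity) (by linarith) (by linarith)
    calc (4 * 2 ^ |p - 2|)⁻¹ * ((δ + a + t) ^ (p - 2) * t ^ 2)
        = t ^ 2 / 4 * ((2 ^ |p - 2|)⁻¹ * (δ + a + t) ^ (p - 2)) := by ring
      _ ≤ t ^ 2 / 4 * (δ + a + t / 2) ^ (p - 2) := by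
        gcongr
        rwa [inv_mul_le_iff₀ (by positivity)]
      _ = t / 2 * phi' p (δ + a) (t / 2) := by unfold phi'; ring
      _ ≤ phi p (δ + a) t := mul_phi'_half_le_phi hp.le hb ht.le
  · calc phi p (δ + a) t ≤ t * phi' p (δ + a) t := phi_le_mul_phi' hp.le hb ht.le
      _ = 1 * ((δ + a + t) ^ (p - 2) * t ^ 2) := by unfold phi'; ring
end
end

section
/- Let a : ℝ² → ℝ be continuously differentiable and let α ∈ {1,2}. Define the tangential derivative ∂_τ g := ∂_α g + (∂_α a)·∂₃ g for functions g on ℝ³ (where ∂_α a is evaluated at x' and ∂_α, ∂₃ are partial derivatives in ℝ³). Then for all continuously differentiable f, g : ℝ³ → ℝ such that the product f·g has compact support: ∫_{ℝ³} f·(∂_τ g) dx = −∫_{ℝ³} (∂_τ f)·g dx. -/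
noncomputable section

open MeasureTheory

/-- The tangential derivative `∂_τ g = ∂_α g + (∂_α a)·∂₃ g` adapted to the graph
`x₃ = a(x')`, for functions on `ℝ³ = ℝ² × ℝ`. -/
def tangDeriv (a : (Fin 2 → ℝ) → ℝ) (α : Fin 2)
    (g : (Fin 2 → ℝ) × ℝ → ℝ) (x : (Fin 2 → ℝ) × ℝ) : ℝ :=
  fderiv ℝ g x ((Pi.single α 1 : Fin 2 → ℝ), (0 : ℝ)) +
    fderiv ℝ a x.1 (Pi.single α 1) * fderiv ℝ g x ((0 : Fin 2 → ℝ), (1 : ℝ))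

/-!
Write `∂_τ g x = Dg(x) V(x)` with the vector field `V(x', x₃) = (e_α, ∂_α a(x'))`. By the product
rule it suffices to show `∫ Dh(x) V(x) dx = 0` for the compactly supported `C¹` function `h = f g`.
The constant part `e_α` of `V` contributes `∫ ∂_α h = 0`. The vertical part contributes
`∫ ∂_α a(x') ∂₃h(x', x₃) dx`, which vanishes by Fubini since on each vertical line the coefficient
is constant and `∫ ∂₃h dx₃ = 0`. This avoids differentiating `∂_α a`, which is only continuous.
-/

theorem integral_fderiv_apply_eq_zero_of_integrable {E F : Type*} [NormedAddCommGroup E]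
    [NormedSpace ℝ E] [FiniteDimensional ℝ E] [MeasurableSpace E] [BorelSpace E]
    {μ : Measure E} [μ.IsAddHaarMeasure] [NormedAddCommGroup F] [NormedSpace ℝ F]
    {h : E → F} (hd : Differentiable ℝ h) (hi : Integrable h μ) (v : E)
    (hi' : Integrable (fun x => fderiv ℝ h x v) μ) :
    ∫ x, fderiv ℝ h x v ∂μ = 0 := by
  simpa using integral_smul_fderiv_eq_neg_fderiv_smul_of_integrable (μ := μ) (v := v)
    (f := fun _ => (1 : ℝ)) (g := h) (by simp) (by simpa using hi') (by simpa using hi)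
    (fun _ _ => differentiableAt_const _) (fun x _ => hd x)

theorem integral_mul_deriv_snd_eq_zero_of_integrable {α : Type*} [MeasurableSpace α]
    {μ : Measure α} [SFinite μ] {h h' : α × ℝ → ℝ}
    (hderiv : ∀ p t, HasDerivAt (fun s => h (p, s)) (h' (p, t)) t)
    (hi : Integrable h (μ.prod volume)) (hi' : Integrable h' (μ.prod volume)) (c : α → ℝ)
    (hci : Integrable (fun x => c x.1 * h' x) (μ.prod volume)) :
    ∫ x, c x.1 * h' x ∂μ.prod volume = 0 := by
  rw [integral_prod _ hci]
  refine integral_eq_zero_of_ae ?_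
  filter_upwards [hi.prod_right_ae, hi'.prod_right_ae] with p hp hp'
  rw [integral_const_mul, integral_eq_zero_of_hasDerivAt_of_integrable (hderiv p) hp' hp,
    mul_zero, Pi.zero_apply]

theorem fderiv_apply_prodMk_eq {E : Type*} [NormedAddCommGroup E] [NormedSpace ℝ E]
    (h : E × ℝ → ℝ) (x : E × ℝ) (u : E) (s : ℝ) :
    fderiv ℝ h x (u, s) = fderiv ℝ h x (u, 0) + s * fderiv ℝ h x (0, 1) := by
  rw [← smul_eq_mul, ← map_smul, ← map_add, Prod.smul_mk, Prod.mk_add_mk, smul_zero, smul_eq_mul,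
    mul_one, add_zero, zero_add]

theorem integral_fderiv_apply_prodMk_eq_zero {E : Type*} [NormedAddCommGroup E]
    [NormedSpace ℝ E] [FiniteDimensional ℝ E] [MeasurableSpace E] [BorelSpace E]
    {μ : Measure E} [μ.IsAddHaarMeasure] {h : E × ℝ → ℝ} (hh : ContDiff ℝ 1 h)
    (hs : HasCompactSupport h) (u : E) {c : E → ℝ} (hc : Continuous c) :
    ∫ x, fderiv ℝ h x (u, c x.1) ∂μ.prod volume = 0 := by
  have hd : Differentiable ℝ h := hh.differentiable one_ne_zero
  have hi : Integrable h (μ.prod volume) := hh.continuous.integrable_of_hasCompactSupport hs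
  have hi' (v : E × ℝ) : Integrable (fun x => fderiv ℝ h x v) (μ.prod volume) :=
    ((hh.continuous_fderiv one_ne_zero).clm_apply continuous_const).integrable_of_hasCompactSupport
      (hs.fderiv_apply (𝕜 := ℝ) v)
  have hci : Integrable (fun x => c x.1 * fderiv ℝ h x (0, 1)) (μ.prod volume) :=
    ((hc.comp continuous_fst).mul ((hh.continuous_fderiv one_ne_zero).clm_apply
      continuous_const)).integrable_of_hasCompactSupport (hs.fderiv_apply (𝕜 := ℝ) _).mul_left
  have hderiv (p : E) (t : ℝ) :
      HasDerivAt (fun s => h (p, s)) (fderiv ℝ h (p, t) (0, 1)) t :=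
    (hd (p, t)).hasFDerivAt.comp_hasDerivAt t ((hasDerivAt_const t p).prodMk (hasDerivAt_id t))
  rw [integral_congr_ae (.of_forall fun x => fderiv_apply_prodMk_eq h x u (c x.1)),
    integral_add (hi' _) hci, integral_fderiv_apply_eq_zero_of_integrable hd hi _ (hi' _),
    integral_mul_deriv_snd_eq_zero_of_integrable hderiv hi (hi' _) c hci, add_zero]

theorem mul_fderiv_apply_eq_zero_of_notMem_tsupport {𝕜 E : Type*} [NontriviallyNormedField 𝕜]
    [NormedAddCommGroup E] [NormedSpace 𝕜 E] {f g : E → 𝕜} (hf : Continuous f) {x : E} (hx : x ∉ tsupport (f * g))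
    (v : E) : f x * fderiv 𝕜 g x v = 0 := by
  rcases eq_or_ne (f x) 0 with hfx | hfx
  · rw [hfx, zero_mul]
  have hg : g =ᶠ[nhds x] fun _ => 0 := by
    filter_upwards [notMem_tsupport_iff_eventuallyEq.mp hx, hf.continuousAt.eventually_ne hfx]
      with y hfg hfy
    exact (mul_eq_zero.mp hfg).resolve_left hfy
  rw [hg.fderiv_eq, fderiv_const_apply, zero_apply, mul_zero]

theorem hasCompactSupport_mul_fderiv_apply {𝕜 E : Type*} [NontriviallyNormedField 𝕜]
    [NormedAddCommGroup E] [NormedSpace 𝕜 E] {f g : E → 𝕜} (hf : Continuous f)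
    (hfg : HasCompactSupport (f * g)) (V : E → E) :
    HasCompactSupport fun x => f x * fderiv 𝕜 g x (V x) :=
  .intro hfg fun x hx => mul_fderiv_apply_eq_zero_of_notMem_tsupport hf hx (V x)

theorem integral_mul_fderiv_apply_prodMk_eq_neg {E : Type*} [NormedAddCommGroup E]
    [NormedSpace ℝ E] [FiniteDimensional ℝ E] [MeasurableSpace E] [BorelSpace E]
    {μ : Measure E} [μ.IsAddHaarMeasure] {f g : E × ℝ → ℝ} (hf : ContDiff ℝ 1 f)
    (hg : ContDiff ℝ 1 g) (hfg : HasCompactSupport (f * g)) (u : E) {c : E → ℝ}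
    (hc : Continuous c) :
    ∫ x, f x * fderiv ℝ g x (u, c x.1) ∂μ.prod volume =
      -∫ x, fderiv ℝ f x (u, c x.1) * g x ∂μ.prod volume := by
  have hV : Continuous fun x : E × ℝ => ((u, c x.1) : E × ℝ) :=
    continuous_const.prodMk (hc.comp continuous_fst)
  have hcont {φ ψ : E × ℝ → ℝ} (hφ : Continuous φ) (hψ : ContDiff ℝ 1 ψ) :
      Continuous fun x => φ x * fderiv ℝ ψ x (u, c x.1) :=
    hφ.mul ((hψ.continuous_fderiv one_ne_zero).clm_apply hV)
  have hi_left : Integrable (fun x => f x * fderiv ℝ g x (u, c x.1)) (μ.prod volume) :=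
    (hcont hf.continuous hg).integrable_of_hasCompactSupport
      (hasCompactSupport_mul_fderiv_apply hf.continuous hfg _)
  have hi_right : Integrable (fun x => fderiv ℝ f x (u, c x.1) * g x) (μ.prod volume) := by
    simp_rw [mul_comm _ (g _)]
    exact (hcont hg.continuous hf).integrable_of_hasCompactSupport
      (hasCompactSupport_mul_fderiv_apply hg.continuous (mul_comm f g ▸ hfg) _)
  have hproduct (x : E × ℝ) : fderiv ℝ (f * g) x (u, c x.1) =
      f x * fderiv ℝ g x (u, c x.1) + fderiv ℝ f x (u, c x.1) * g x := by
    rw [fderiv_mul (hf.differentiable one_ne_zero x) (hg.differentiable one_ne_zero x)]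
    simp only [add_apply, smul_apply, smul_eq_mul]
    ring
  rw [eq_neg_iff_add_eq_zero, ← integral_add hi_left hi_right]
  simp_rw [← hproduct]
  exact integral_fderiv_apply_prodMk_eq_zero (hf.mul hg) hfg u hc

theorem tangDeriv_eq_fderiv_apply (a : (Fin 2 → ℝ) → ℝ) (α : Fin 2)
    (g : (Fin 2 → ℝ) × ℝ → ℝ) (x : (Fin 2 → ℝ) × ℝ) :
    tangDeriv a α g x = fderiv ℝ g x (Pi.single α 1, fderiv ℝ a x.1 (Pi.single α 1)) :=
  (fderiv_apply_prodMk_eq g x _ _).symm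

/-- Integration by parts for tangential derivatives: for `a` of class `C¹` and
`C¹` functions `f, g` whose product has compact support,
`∫ f ∂_τ g dx = −∫ (∂_τ f) g dx`. -/
theorem tangDeriv_integration_by_parts
    (a : (Fin 2 → ℝ) → ℝ) (ha : ContDiff ℝ 1 a) (α : Fin 2)
    (f g : (Fin 2 → ℝ) × ℝ → ℝ)
    (hf : ContDiff ℝ 1 f) (hg : ContDiff ℝ 1 g)
    (hsupp : HasCompactSupport fun x => f x * g x) :
    ∫ x, f x * tangDeriv a α g x = -∫ x, tangDeriv a α f x * g x := by
  simp_rw [tangDeriv_eq_fderiv_apply]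
  exact integral_mul_fderiv_apply_prodMk_eq_neg hf hg hsupp _
    ((ha.continuous_fderiv one_ne_zero).clm_apply continuous_const)
end
end
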